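/- arXiv:2405.19098 — 3 statements merged into one kernel-verified Lean document; each statement's English description precedes it below -/
import Mathlib

section
/- Let H be a real inner product space, A a nonempty set, and φ : A → H a feature map with ‖φ(x)‖ ≤ 1 for all x ∈ A. Fix w, w' ∈ H, define f(x) = ⟨w, φ(x)⟩ and f'(x) = ⟨w', φ(x)⟩, set β = ‖w − w'‖, and fix a noise level σ > 0. Let x₁, …, x_T ∈ A be a sequence such that: for each t ≥ 0, letting K_t be the t×t Gram matrix with entries ⟨φ(x_i), φ(x_j)⟩ (i,j ≤ t), k_t(x) = (⟨φ(x_i), φ(x)⟩)_{i≤t}, y_t = (f(x_i))_{i≤t}, y'_t = (f'(x_i))_{i≤t}, μ_t(x) = k_t(x)ᵀ (K_t + σ²I)⁻¹ (y_t − y'_t) + f'(x), and s_t(x)² = ‖φ(x)‖² − k_t(x)ᵀ (K_t + σ²I)⁻¹ k_t(x) (with μ₀ = f' and s₀(x) = ‖φ(x)‖), the point x_{t+1} maximizes μ_t(x) + β √(s_t(x)²) over x ∈ A. If x* maximizes f over A, then the cumulative regret satisfies Σ_{t=1}^T (f(x*) − f(x_t)) ≤ β · √( (8 / log(1 + σ⁻²))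 · T · γ_T ), where γ_T = ½ log det(I + σ⁻² K_T) for the Gram matrix K_T of the selected points φ(x₁), …, φ(x_T). -/
open scoped RealInnerProductSpace Matrix

/-- The Gram matrix of a finite family of vectors in a real inner product space. -/
noncomputable def gram {H : Type*} [NormedAddCommGroup H] [InnerProductSpace ℝ H]
    {T : ℕ} (v : Fin T → H) : Matrix (Fin T) (Fin T) ℝ :=
  Matrix.of fun i j => ⟪v i, v j⟫

/-- The vector of inner products of a point `x` with the family `v`. -/
noncomputable def kvec {H : Type*} [NormedAddCommGroup H] [InnerProductSpace ℝ H]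
    {T : ℕ} (v : Fin T → H) (x : H) : Fin T → ℝ :=
  fun i => ⟪v i, x⟫

/-- The Gaussian-process posterior mean at `x`, with prior mean `⟪w', ·⟫`, observations of
`⟪w, ·⟫` at the points `v`, and observation-noise variance `σ²`:
`μ(x) = k(x)ᵀ (K + σ²I)⁻¹ (y - y') + ⟪w', x⟫`. -/
noncomputable def postMean {H : Type*} [NormedAddCommGroup H] [InnerProductSpace ℝ H]
    {T : ℕ} (σ : ℝ) (v : Fin T → H) (w w' : H) (x : H) : ℝ :=
  kvec v x ⬝ᵥ ((gram v + σ ^ 2 • (1 : Matrix (Fin T) (Fin T) ℝ))⁻¹ *ᵥ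
      fun i => ⟪w, v i⟫ - ⟪w', v i⟫)
    + ⟪w', x⟫

/-- The noise-regularized posterior variance
`s(x)² = ‖x‖² - k(x)ᵀ (K + σ²I)⁻¹ k(x)` of a point `x` given observations at `v`. -/
noncomputable def postVarSq {H : Type*} [NormedAddCommGroup H] [InnerProductSpace ℝ H]
    {T : ℕ} (σ : ℝ) (v : Fin T → H) (x : H) : ℝ :=
  ‖x‖ ^ 2 - kvec v x ⬝ᵥ ((gram v + σ ^ 2 • (1 : Matrix (Fin T) (Fin T) ℝ))⁻¹ *ᵥ kvec v x)

/-!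
Write `α = (K + σ²I)⁻¹ k(x)` for the posterior weights of a point `x` and `r = x - ∑ αᵢ vᵢ` for
its residual. Then `f(x) - μ(x) = ⟪w - w', r⟫` and `s(x)² = ‖r‖² + σ² ‖α‖²`, so Cauchy–Schwarz in
`H` gives the confidence bound `|f - μ| ≤ β s`, and the UCB rule bounds the regret of round `t` by
`2 β s_t(x_{t+1})`. The Schur complement of the new row gives
`det(K_{t+1} + σ²I) = det(K_t + σ²I) (σ² + s_t²)`, hence
`log det(I + σ⁻² K_T) = ∑ log(1 + σ⁻² s_t²) ≥ log(1 + σ⁻²) ∑ s_t²` by concavity of `log` (as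
`s_t² ≤ 1`). Cauchy–Schwarz over the rounds finishes the proof.
-/

open Finset
open Matrix hiding gram

lemma mul_log_one_add_le_log_one_add_mul {a s : ℝ} (ha : -1 < a) (hs₀ : 0 ≤ s) (hs₁ : s ≤ 1) :
    s * Real.log (1 + a) ≤ Real.log (1 + a * s) := by
  have hpos : 0 < 1 + a := by linarith
  rw [← Real.log_rpow hpos, mul_comm a]
  exact Real.log_le_log (Real.rpow_pos_of_pos hpos s)
    (rpow_one_add_le_one_add_mul_self ha.le hs₀ hs₁)

lemma sum_sqrt_le_sqrt_card_mul_sum {ι : Type*} (s : Finset ι) {f : ι → ℝ}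
    (hf : ∀ i ∈ s, 0 ≤ f i) : ∑ i ∈ s, √(f i) ≤ √(#s * ∑ i ∈ s, f i) := by
  refine Real.le_sqrt_of_sq_le ((sq_sum_le_card_mul_sum_sq).trans_eq ?_)
  rw [sum_congr rfl fun i hi => Real.sq_sqrt (hf i hi)]

section Posterior

variable {H : Type*} [NormedAddCommGroup H] [InnerProductSpace ℝ H] {T : ℕ} {σ : ℝ}

noncomputable def postWeights (σ : ℝ) (v : Fin T → H) (x : H) : Fin T → ℝ :=
  (gram v + σ ^ 2 • (1 : Matrix (Fin T) (Fin T) ℝ))⁻¹ *ᵥ kvec v x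

lemma dotProduct_gram_mulVec_self (v : Fin T → H) (z : Fin T → ℝ) :
    z ⬝ᵥ (gram v *ᵥ z) = ‖∑ i, z i • v i‖ ^ 2 := by
  rw [← real_inner_self_eq_norm_sq, ← star_dotProduct_gram_mulVec]
  rfl

lemma posDef_gram_add_smul_one (hσ : σ ≠ 0) (v : Fin T → H) :
    (gram v + σ ^ 2 • (1 : Matrix (Fin T) (Fin T) ℝ)).PosDef :=
  PosDef.posSemidef_add (posSemidef_gram ℝ v) (PosDef.one.smul (sq_pos_of_ne_zero hσ))

lemma inner_sum_smul_left (v : Fin T → H) (z : Fin T → ℝ) (x : H) :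
    ⟪∑ i, z i • v i, x⟫ = z ⬝ᵥ kvec v x := by
  simp [sum_inner, real_inner_smul_left, dotProduct, kvec]

lemma gram_mulVec_postWeights (hσ : σ ≠ 0) (v : Fin T → H) (x : H) :
    gram v *ᵥ postWeights σ v x = kvec v x - σ ^ 2 • postWeights σ v x := by
  have hM := (posDef_gram_add_smul_one hσ v).isUnit
  have h : (gram v + σ ^ 2 • (1 : Matrix (Fin T) (Fin T) ℝ)) *ᵥ postWeights σ v x = kvec v x := by
    rw [postWeights, mulVec_mulVec, mul_nonsing_inv _ ((isUnit_iff_isUnit_det _).1 hM),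
      one_mulVec]
  rw [add_mulVec, smul_mulVec, one_mulVec] at h
  rw [← h, add_sub_cancel_right]

lemma kvec_dotProduct_inv_mulVec (hσ : σ ≠ 0) (v : Fin T → H) (x : H) (y : Fin T → ℝ) :
    kvec v x ⬝ᵥ ((gram v + σ ^ 2 • (1 : Matrix (Fin T) (Fin T) ℝ))⁻¹ *ᵥ y)
      = postWeights σ v x ⬝ᵥ y := by
  have hsymm := isHermitian_iff_isSymm.1 (posDef_gram_add_smul_one hσ v).inv.isHermitian
  rw [dotProduct_mulVec, ← hsymm.eq, vecMul_transpose, postWeights]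

lemma postMean_eq (hσ : σ ≠ 0) (v : Fin T → H) (w w' x : H) :
    postMean σ v w w' x = ⟪∑ i, postWeights σ v x i • v i, w - w'⟫ + ⟪w', x⟫ := by
  have hy : (fun i => ⟪w, v i⟫ - ⟪w', v i⟫) = kvec v (w - w') := by
    ext i
    simp only [kvec, inner_sub_right, real_inner_comm]
  rw [postMean, hy, kvec_dotProduct_inv_mulVec hσ, inner_sum_smul_left]

lemma inner_sub_postMean (hσ : σ ≠ 0) (v : Fin T → H) (w w' x : H) :
    ⟪w, x⟫ - postMean σ v w w' x = ⟪w - w', x - ∑ i, postWeights σ v x i • v i⟫ := by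
  simp only [postMean_eq hσ, inner_sub_left, inner_sub_right, real_inner_comm w,
    real_inner_comm w']
  ring

lemma postVarSq_eq (hσ : σ ≠ 0) (v : Fin T → H) (x : H) :
    postVarSq σ v x = ‖x - ∑ i, postWeights σ v x i • v i‖ ^ 2
      + σ ^ 2 * (postWeights σ v x ⬝ᵥ postWeights σ v x) := by
  set α := postWeights σ v x
  have hquad : ‖∑ i, α i • v i‖ ^ 2 = α ⬝ᵥ kvec v x - σ ^ 2 * (α ⬝ᵥ α) := by
    rw [← dotProduct_gram_mulVec_self, gram_mulVec_postWeights hσ, dotProduct_sub,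
      dotProduct_smul, smul_eq_mul]
  have hvar : postVarSq σ v x = ‖x‖ ^ 2 - α ⬝ᵥ kvec v x := by
    rw [postVarSq, dotProduct_comm]
    rfl
  rw [norm_sub_sq_real, hquad, real_inner_comm, inner_sum_smul_left, hvar]
  ring

lemma postVarSq_nonneg (hσ : σ ≠ 0) (v : Fin T → H) (x : H) : 0 ≤ postVarSq σ v x := by
  rw [postVarSq_eq hσ]
  have := dotProduct_self_star_nonneg (postWeights σ v x)
  positivity

lemma norm_sub_sum_sq_le_postVarSq (hσ : σ ≠ 0) (v : Fin T → H) (x : H) :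
    ‖x - ∑ i, postWeights σ v x i • v i‖ ^ 2 ≤ postVarSq σ v x := by
  rw [postVarSq_eq hσ]
  have := dotProduct_self_star_nonneg (postWeights σ v x)
  have : 0 ≤ σ ^ 2 * (postWeights σ v x ⬝ᵥ postWeights σ v x) := by positivity
  linarith

lemma postVarSq_le_norm_sq (hσ : σ ≠ 0) (v : Fin T → H) (x : H) :
    postVarSq σ v x ≤ ‖x‖ ^ 2 := by
  have h := (posDef_gram_add_smul_one hσ v).inv.posSemidef.dotProduct_mulVec_nonneg (kvec v x)
  rw [postVarSq]
  exact sub_le_self _ h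

lemma abs_inner_sub_postMean_le (hσ : σ ≠ 0) (v : Fin T → H) (w w' x : H) :
    |⟪w, x⟫ - postMean σ v w w' x| ≤ ‖w - w'‖ * √(postVarSq σ v x) := by
  rw [inner_sub_postMean hσ]
  refine (abs_real_inner_le_norm _ _).trans (mul_le_mul_of_nonneg_left ?_ (norm_nonneg _))
  exact Real.le_sqrt_of_sq_le (norm_sub_sum_sq_le_postVarSq hσ v x)

lemma submatrix_gram_snoc_add_smul_one (c : ℝ) (v : Fin T → H) (u : H) :
    (gram (Fin.snoc v u : Fin (T + 1) → H)
        + c • (1 : Matrix (Fin (T + 1)) (Fin (T + 1)) ℝ)).submatrix finSumFinEquiv finSumFinEquiv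
      = fromBlocks (gram v + c • 1) (of fun i (_ : Fin 1) => kvec v u i)
          (of fun (_ : Fin 1) j => kvec v u j) (of fun _ _ => ‖u‖ ^ 2 + c) := by
  have hlast (j : Fin 1) : Fin.natAdd T j = Fin.last T := by rw [Subsingleton.elim j 0]; rfl
  have hcast (i : Fin T) : Fin.castAdd 1 i = i.castSucc := rfl
  ext (i | i) (j | j) <;>
    simp [gram, kvec, one_apply, hlast, hcast, real_inner_comm,
      Fin.castSucc_ne_last, (Fin.castSucc_ne_last _).symm]

lemma det_gram_snoc_add_smul_one (hσ : σ ≠ 0) (v : Fin T → H) (u : H) :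
    (gram (Fin.snoc v u : Fin (T + 1) → H)
        + σ ^ 2 • (1 : Matrix (Fin (T + 1)) (Fin (T + 1)) ℝ)).det
      = (gram v + σ ^ 2 • (1 : Matrix (Fin T) (Fin T) ℝ)).det * (σ ^ 2 + postVarSq σ v u) := by
  set M := gram v + σ ^ 2 • (1 : Matrix (Fin T) (Fin T) ℝ)
  have : Invertible M := M.invertibleOfIsUnitDet (posDef_gram_add_smul_one hσ v).det_pos.ne'.isUnit
  have hschur : (of fun (_ : Fin 1) j => kvec v u j) * ⅟M * (of fun i (_ : Fin 1) => kvec v u i)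
      = of fun _ _ => kvec v u ⬝ᵥ (M⁻¹ *ᵥ kvec v u) := by
    ext
    simp only [invOf_eq_nonsing_inv, Matrix.mul_apply, of_apply, sum_mul, mul_sum, mul_assoc,
      dotProduct, mulVec]
    exact sum_comm
  rw [← det_submatrix_equiv_self finSumFinEquiv, submatrix_gram_snoc_add_smul_one,
    det_fromBlocks₁₁, hschur, det_fin_one, postVarSq]
  simp only [Matrix.sub_apply, of_apply]
  ring

lemma inner_sub_inner_le_of_ucb_le (hσ : σ ≠ 0) (v : Fin T → H) {w w' a x : H}
    (hucb : postMean σ v w w' a + ‖w - w'‖ * √(postVarSq σ v a)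
      ≤ postMean σ v w w' x + ‖w - w'‖ * √(postVarSq σ v x)) :
    ⟪w, a⟫ - ⟪w, x⟫ ≤ 2 * ‖w - w'‖ * √(postVarSq σ v x) := by
  have ha := (abs_le.1 (abs_inner_sub_postMean_le hσ v w w' a)).2
  have hx := (abs_le.1 (abs_inner_sub_postMean_le hσ v w w' x)).1
  linarith

lemma det_gram_add_smul_one_eq_prod (hσ : σ ≠ 0) (u : ℕ → H) (T : ℕ) :
    (gram (fun i : Fin T => u i) + σ ^ 2 • (1 : Matrix (Fin T) (Fin T) ℝ)).det
      = ∏ t ∈ range T, (σ ^ 2 + postVarSq σ (fun i : Fin t => u i) (u t)) := by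
  induction T with
  | zero => simp
  | succ T ih =>
    rw [← Fin.snoc_init_self (fun i : Fin (T + 1) => u i), det_gram_snoc_add_smul_one hσ,
      prod_range_succ, ← ih]
    rfl

lemma log_det_one_add_inv_smul_gram (hσ : σ ≠ 0) (u : ℕ → H) (T : ℕ) :
    Real.log ((1 : Matrix (Fin T) (Fin T) ℝ) + (σ ^ 2)⁻¹ • gram (fun i : Fin T => u i)).det
      = ∑ t ∈ range T, Real.log (1 + (σ ^ 2)⁻¹ * postVarSq σ (fun i : Fin t => u i) (u t)) := by
  have hσ2 : σ ^ 2 ≠ 0 := pow_ne_zero 2 hσ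
  have hmat : (1 : Matrix (Fin T) (Fin T) ℝ) + (σ ^ 2)⁻¹ • gram (fun i : Fin T => u i)
      = (σ ^ 2)⁻¹ • (gram (fun i : Fin T => u i) + σ ^ 2 • 1) := by
    rw [smul_add, smul_smul, inv_mul_cancel₀ hσ2, one_smul, add_comm]
  rw [hmat, det_smul, det_gram_add_smul_one_eq_prod hσ, Fintype.card_fin]
  nth_rw 1 [← card_range T]
  rw [pow_card_mul_prod, Real.log_prod]
  · refine sum_congr rfl fun t _ => ?_
    rw [mul_add, inv_mul_cancel₀ hσ2]
  · intro t _
    have := postVarSq_nonneg hσ (fun i : Fin t => u i) (u t)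
    positivity

lemma sum_postVarSq_le_log_det (hσ : σ ≠ 0) (u : ℕ → H) (hu : ∀ n, ‖u n‖ ≤ 1) (T : ℕ) :
    ∑ t ∈ range T, postVarSq σ (fun i : Fin t => u i) (u t)
      ≤ Real.log ((1 : Matrix (Fin T) (Fin T) ℝ) + (σ ^ 2)⁻¹ • gram (fun i : Fin T => u i)).det
        / Real.log (1 + (σ ^ 2)⁻¹) := by
  have hσ2 : 0 < (σ ^ 2)⁻¹ := inv_pos.2 (sq_pos_of_ne_zero hσ)
  rw [le_div_iff₀ (Real.log_pos (by linarith)), sum_mul, log_det_one_add_inv_smul_gram hσ]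
  refine sum_le_sum fun t _ => ?_
  have hs₁ : postVarSq σ (fun i : Fin t => u i) (u t) ≤ 1 :=
    (postVarSq_le_norm_sq hσ _ _).trans (pow_le_one₀ (norm_nonneg _) (hu t))
  exact mul_log_one_add_le_log_one_add_mul (by linarith) (postVarSq_nonneg hσ _ _) hs₁

end Posterior

theorem pbo_regret_bound_general {H : Type*} [NormedAddCommGroup H] [InnerProductSpace ℝ H]
    {A : Type*}
    (φ : A → H) (hφ : ∀ a, ‖φ a‖ ≤ 1)
    (w w' : H) (σ : ℝ) (hσ : 0 < σ) (T : ℕ) (x : ℕ → A)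
    (hmax : ∀ t < T, ∀ a : A,
      postMean σ (fun i : Fin t => φ (x (i.1 + 1))) w w' (φ a)
          + ‖w - w'‖ * Real.sqrt (postVarSq σ (fun i : Fin t => φ (x (i.1 + 1))) (φ a))
        ≤ postMean σ (fun i : Fin t => φ (x (i.1 + 1))) w w' (φ (x (t + 1)))
          + ‖w - w'‖ *
              Real.sqrt (postVarSq σ (fun i : Fin t => φ (x (i.1 + 1))) (φ (x (t + 1)))))
    (xstar : A) :
    ∑ t ∈ Finset.range T, (⟪w, φ xstar⟫ - ⟪w, φ (x (t + 1))⟫)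
      ≤ ‖w - w'‖ * Real.sqrt ((8 / Real.log (1 + (σ ^ 2)⁻¹)) * T *
          (1 / 2 * Real.log ((1 : Matrix (Fin T) (Fin T) ℝ)
              + (σ ^ 2)⁻¹ • gram (fun i : Fin T => φ (x (i.1 + 1)))).det)) := by
  set u : ℕ → H := fun n => φ (x (n + 1))
  set s : ℕ → ℝ := fun t => postVarSq σ (fun i : Fin t => u i) (u t)
  set G := Real.log ((1 : Matrix (Fin T) (Fin T) ℝ) + (σ ^ 2)⁻¹ • gram (fun i : Fin T => u i)).det
  set L := Real.log (1 + (σ ^ 2)⁻¹)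
  have hregret (t : ℕ) (ht : t ∈ range T) :
      ⟪w, φ xstar⟫ - ⟪w, u t⟫ ≤ 2 * ‖w - w'‖ * √(s t) :=
    inner_sub_inner_le_of_ucb_le hσ.ne' _ (hmax t (mem_range.1 ht) xstar)
  have hcs : ∑ t ∈ range T, √(s t) ≤ √(T * ∑ t ∈ range T, s t) := by
    simpa using sum_sqrt_le_sqrt_card_mul_sum (range T) fun t _ => postVarSq_nonneg hσ.ne' _ (u t)
  have hinfo : ∑ t ∈ range T, s t ≤ G / L := sum_postVarSq_le_log_det hσ.ne' u (fun n => hφ _) T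
  calc ∑ t ∈ range T, (⟪w, φ xstar⟫ - ⟪w, u t⟫)
      ≤ ∑ t ∈ range T, 2 * ‖w - w'‖ * √(s t) := sum_le_sum hregret
    _ = 2 * ‖w - w'‖ * ∑ t ∈ range T, √(s t) := (mul_sum _ _ _).symm
    _ ≤ 2 * ‖w - w'‖ * √(T * (G / L)) := by gcongr; exact hcs.trans (by gcongr)
    _ = ‖w - w'‖ * √((8 / L) * T * (1 / 2 * G)) := by
      rw [show (8 / L) * (T : ℝ) * (1 / 2 * G) = 2 ^ 2 * (T * (G / L)) by ring,
        Real.sqrt_mul (by norm_num : (0 : ℝ) ≤ 2 ^ 2), Real.sqrt_sq zero_le_two]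
      ring

/-- **Regret bound for Prior-guided Bayesian Optimization (Theorem 1).**
The objective is `f = ⟪w, φ ·⟫`, the function prior is `f' = ⟪w', φ ·⟫`, and at each round
`t < T` the point `x_{t+1}` maximizes the UCB acquisition `μ_t + β √(s_t²)` built from the
Gaussian process with prior mean `f'` and noise level `σ`, where `β = ‖w - w'‖`. If `x*`
maximizes `f` over `A`, then the cumulative regret is bounded by
`β √((8 / log(1 + σ⁻²)) T γ_T)` with `γ_T = ½ log det(I + σ⁻² K_T)`. -/
theorem pbo_regret_bound {H : Type*} [NormedAddCommGroup H] [InnerProductSpace ℝ H]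
    {A : Type*} [Nonempty A]
    (φ : A → H) (hφ : ∀ a, ‖φ a‖ ≤ 1)
    (w w' : H) (σ : ℝ) (hσ : 0 < σ) (T : ℕ) (x : ℕ → A)
    (hmax : ∀ t < T, ∀ a : A,
      postMean σ (fun i : Fin t => φ (x (i.1 + 1))) w w' (φ a)
          + ‖w - w'‖ * Real.sqrt (postVarSq σ (fun i : Fin t => φ (x (i.1 + 1))) (φ a))
        ≤ postMean σ (fun i : Fin t => φ (x (i.1 + 1))) w w' (φ (x (t + 1)))
          + ‖w - w'‖ *
              Real.sqrt (postVarSq σ (fun i : Fin t => φ (x (i.1 + 1))) (φ (x (t + 1)))))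
    (xstar : A) (hxstar : ∀ a : A, ⟪w, φ a⟫ ≤ ⟪w, φ xstar⟫) :
    ∑ t ∈ Finset.range T, (⟪w, φ xstar⟫ - ⟪w, φ (x (t + 1))⟫)
      ≤ ‖w - w'‖ * Real.sqrt ((8 / Real.log (1 + (σ ^ 2)⁻¹)) * T *
          (1 / 2 * Real.log ((1 : Matrix (Fin T) (Fin T) ℝ)
              + (σ ^ 2)⁻¹ • gram (fun i : Fin T => φ (x (i.1 + 1)))).det)) :=
  pbo_regret_bound_general φ hφ w w' σ hσ T x hmax xstar
end

section
/- Let H be a real inner product space, v₁, …, v_T ∈ H with invertible Gram matrix K (entries K_{ij} = ⟨v_i, v_j⟩). Fix w, w' ∈ H and set y = (⟨w, v_t⟩)_{t≤T}, y' = (⟨w', v_t⟩)_{t≤T}. For x ∈ H define k(x) = (⟨v_t, x⟩)_{t≤T}, μ(x) = k(x)ᵀ K⁻¹ (y − y') + ⟨w', x⟩, and s(x)² = ‖x‖² − k(x)ᵀ K⁻¹ k(x). Then for every x ∈ H, s(x)² ≥ 0 and |⟨w, x⟩ − μ(x)| ≤ ‖w − w'‖ · √(s(x)²). -/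
open scoped RealInnerProductSpace Matrix

/-- **Noiseless Gaussian-process confidence bound with prior mean `⟪w', ·⟫`.**
With `μ(x) = k(x)ᵀ K⁻¹ (y - y') + ⟪w', x⟫` and `s(x)² = ‖x‖² - k(x)ᵀ K⁻¹ k(x)`,
one has `s(x)² ≥ 0` and `|⟪w, x⟫ - μ(x)| ≤ ‖w - w'‖ √(s(x)²)`. -/
theorem noiseless_confidence_bound {H : Type*} [NormedAddCommGroup H] [InnerProductSpace ℝ H]
    (T : ℕ) (v : Fin T → H) (hK : IsUnit (gram v).det) (w w' : H) (x : H) :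
    let y : Fin T → ℝ := fun t => ⟪w, v t⟫
    let y' : Fin T → ℝ := fun t => ⟪w', v t⟫
    let μ : ℝ := kvec v x ⬝ᵥ ((gram v)⁻¹ *ᵥ (y - y')) + ⟪w', x⟫
    let s2 : ℝ := ‖x‖ ^ 2 - kvec v x ⬝ᵥ ((gram v)⁻¹ *ᵥ kvec v x)
    0 ≤ s2 ∧ |⟪w, x⟫ - μ| ≤ ‖w - w'‖ * Real.sqrt s2 := by
  intro y y' μ s2
  set K := gram v with hKdef
  have hKsymm : Kᵀ = K := by
    ext i j; simp [hKdef, gram, Matrix.transpose_apply, real_inner_comm]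
  have hKinvsymm : (K⁻¹)ᵀ = K⁻¹ := by
    rw [Matrix.transpose_nonsing_inv, hKsymm]
  set c : Fin T → ℝ := K⁻¹ *ᵥ kvec v x with hc
  set p : H := ∑ i, c i • v i with hp
  have hKc : K *ᵥ c = kvec v x := by
    rw [hc, Matrix.mulVec_mulVec, Matrix.mul_nonsing_inv _ hK, Matrix.one_mulVec]
  -- dot product with K⁻¹ can be moved to the other side
  have hswap : ∀ b : Fin T → ℝ, kvec v x ⬝ᵥ (K⁻¹ *ᵥ b) = c ⬝ᵥ b := by
    intro b
    rw [Matrix.dotProduct_mulVec, hc, ← Matrix.mulVec_transpose, hKinvsymm]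
  have hpv : ∀ j, ⟪p, v j⟫ = kvec v x j := by
    intro j
    have := congrFun hKc j
    simp only [Matrix.mulVec, dotProduct, hKdef, gram, Matrix.of_apply] at this
    rw [hp, sum_inner]
    rw [← this]
    refine Finset.sum_congr rfl fun i _ => ?_
    rw [real_inner_smul_left, real_inner_comm, mul_comm]
  have hpx : ⟪p, x⟫ = c ⬝ᵥ kvec v x := by
    rw [hp, sum_inner]
    refine Finset.sum_congr rfl fun i _ => ?_
    rw [real_inner_smul_left]; rfl
  have hpp : ⟪p, p⟫ = c ⬝ᵥ kvec v x := by
    conv_lhs => rw [hp]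
    rw [inner_sum]
    refine Finset.sum_congr rfl fun i _ => ?_
    rw [real_inner_smul_right, hpv]
  have hs2 : s2 = ‖x - p‖ ^ 2 := by
    have : ‖x - p‖ ^ 2 = ‖x‖ ^ 2 - 2 * ⟪p, x⟫ + ‖p‖ ^ 2 := by
      rw [← real_inner_self_eq_norm_sq, ← real_inner_self_eq_norm_sq,
        ← real_inner_self_eq_norm_sq, inner_sub_sub_self]
      ring_nf
      rw [real_inner_comm x p]
      ring
    have hnp : ‖p‖ ^ 2 = c ⬝ᵥ kvec v x := by
      rw [← real_inner_self_eq_norm_sq, hpp]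
    rw [this, hnp, hpx]
    show ‖x‖ ^ 2 - kvec v x ⬝ᵥ (K⁻¹ *ᵥ kvec v x) = _
    rw [hswap]
    ring
  have hμ : kvec v x ⬝ᵥ (K⁻¹ *ᵥ (y - y')) = ⟪w - w', p⟫ := by
    rw [hswap, hp, inner_sum]
    refine Finset.sum_congr rfl fun i _ => ?_
    rw [real_inner_smul_right, inner_sub_left]
    simp [dotProduct, y, y', mul_comm]
  have hdiff : ⟪w, x⟫ - μ = ⟪w - w', x - p⟫ := by
    show ⟪w, x⟫ - (kvec v x ⬝ᵥ (K⁻¹ *ᵥ (y - y')) + ⟪w', x⟫) = _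
    rw [hμ, inner_sub_left, inner_sub_left, inner_sub_right, inner_sub_right]
    ring
  constructor
  · rw [hs2]; positivity
  · rw [hdiff, hs2, Real.sqrt_sq (norm_nonneg _)]
    exact abs_real_inner_le_norm _ _
end

section
/- Let A be a nonempty set, f, μ, s : A → ℝ with s ≥ 0, and β ≥ 0. Assume |f(x) − μ(x)| ≤ β s(x) for all x ∈ A. Let x* ∈ A and let x̂ ∈ A satisfy μ(x) + β s(x) ≤ μ(x̂) + β s(x̂) for all x ∈ A (i.e., x̂ maximizes the UCB acquisition μ + β s). Then f(x*) − f(x̂) ≤ 2 β s(x̂). -/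
/-- **Instantaneous regret of the UCB maximizer.** If `μ` and `s` give a valid confidence
band of level `β` around `f`, then the maximizer of the UCB acquisition `μ + β s` has
instantaneous regret at most `2 β s` at that point. -/
theorem ucb_instantaneous_regret {A : Type*} [Nonempty A]
    (f μ s : A → ℝ) (hs : ∀ x, 0 ≤ s x) (β : ℝ) (hβ : 0 ≤ β)
    (hconf : ∀ x, |f x - μ x| ≤ β * s x)
    (xstar xhat : A)
    (hmax : ∀ x, μ x + β * s x ≤ μ xhat + β * s xhat) :
    f xstar - f xhat ≤ 2 * β * s xhat := by
  have h1 := abs_le.mp (hconf xstar)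
  have h2 := abs_le.mp (hconf xhat)
  have h3 := hmax xstar
  linarith [h1.1, h1.2, h2.1, h2.2]
end
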